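/- arXiv:1403.2543 — 3 statements merged into one kernel-verified Lean document; each statement's English description precedes it below -/
import Mathlib

section
/- Let A and B be positive semidefinite d×d complex matrices and let Λ be a CPTP map in Kraus form from d×d matrices to d'×d' matrices. Then Tr[(Λ(A) − Λ(B))₊] ≤ Tr[(A − B)₊]. -/
open Matrix
open scoped ComplexOrder

noncomputable section

/-- Positive part `C₊` of a Hermitian matrix, obtained by applying `x ↦ max x 0` to the
eigenvalues in a spectral decomposition (junk value `0` for non-Hermitian input). -/
def matPos {n : Type*} [Fintype n] [DecidableEq n] (A : Matrix n n ℂ) : Matrix n n ℂ :=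
  if hA : A.IsHermitian then
    (hA.eigenvectorUnitary : Matrix n n ℂ) *
      Matrix.diagonal (fun i => ((max (hA.eigenvalues i) 0 : ℝ) : ℂ)) *
      star (hA.eigenvectorUnitary : Matrix n n ℂ)
  else 0

/-- `Tr C₊` as a real number. -/
def trPos {n : Type*} [Fintype n] [DecidableEq n] (A : Matrix n n ℂ) : ℝ :=
  (matPos A).trace.re

/-- Spectral projection of a Hermitian matrix onto `[0, ∞)` (junk value `0` for
non-Hermitian input). -/
def projNonneg {n : Type*} [Fintype n] [DecidableEq n] (A : Matrix n n ℂ) : Matrix n n ℂ :=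
  if hA : A.IsHermitian then
    (hA.eigenvectorUnitary : Matrix n n ℂ) *
      Matrix.diagonal (fun i => if 0 ≤ hA.eigenvalues i then (1 : ℂ) else 0) *
      star (hA.eigenvectorUnitary : Matrix n n ℂ)
  else 0

/-
With `P` the spectral projection of `Λ(A - B)` onto `[0, ∞)`, `Tr Λ(A - B)₊ = Tr[P Λ(A - B)]`.
Since `A - B ≤ (A - B)₊` and `Λ` is positive, `Λ(A - B) ≤ Λ((A - B)₊)`, so by `0 ≤ P ≤ 1` this is
at most `Tr[P Λ((A - B)₊)] ≤ Tr Λ((A - B)₊)`, which is `Tr (A - B)₊` as `Λ` preserves traces.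
-/

open scoped MatrixOrder

section TracePositivity

variable {𝕜 n : Type*} [RCLike 𝕜] [Fintype n] [DecidableEq n]

lemma Matrix.trace_mul_nonneg {P X : Matrix n n 𝕜} (hP : 0 ≤ P) (hX : 0 ≤ X) :
    0 ≤ (P * X).trace := by
  obtain ⟨Q, rfl⟩ := CStarAlgebra.nonneg_iff_eq_star_mul_self.mp hP
  rw [← Matrix.trace_mul_cycle, star_eq_conjTranspose]
  exact (hX.posSemidef.mul_mul_conjTranspose_same Q).trace_nonneg

lemma Matrix.trace_mul_le_trace_mul_of_nonneg_left {P X Y : Matrix n n 𝕜} (hXY : X ≤ Y)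
    (hP : 0 ≤ P) : (P * X).trace ≤ (P * Y).trace := by
  simpa [Matrix.mul_sub] using Matrix.trace_mul_nonneg hP (sub_nonneg.mpr hXY)

lemma Matrix.trace_mul_le_trace_mul_of_nonneg_right {P Q X : Matrix n n 𝕜} (hPQ : P ≤ Q)
    (hX : 0 ≤ X) : (P * X).trace ≤ (Q * X).trace := by
  simpa [Matrix.sub_mul] using Matrix.trace_mul_nonneg (sub_nonneg.mpr hPQ) hX

end TracePositivity

section SpectralParts

variable {n : Type*} [Fintype n] [DecidableEq n]

-- Also for non-Hermitian `A`, where both sides are the junk value `0`.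
lemma matPos_eq_cfc (A : Matrix n n ℂ) : matPos A = cfc (fun x : ℝ => max x 0) A := by
  by_cases hA : A.IsHermitian
  · rw [hA.cfc_eq, matPos, dif_pos hA]
    rfl
  · rw [matPos, dif_neg hA]
    exact (cfc_apply_of_not_predicate A hA).symm

lemma projNonneg_eq_cfc (A : Matrix n n ℂ) :
    projNonneg A = cfc (fun x : ℝ => if 0 ≤ x then 1 else 0) A := by
  by_cases hA : A.IsHermitian
  · rw [hA.cfc_eq, projNonneg, dif_pos hA, Matrix.IsHermitian.cfc]
    congr 3
    ext i
    split_ifs with h <;> simp [h]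
  · rw [projNonneg, dif_neg hA]
    exact (cfc_apply_of_not_predicate A hA).symm

lemma matPos_nonneg (A : Matrix n n ℂ) : 0 ≤ matPos A := by
  rw [matPos_eq_cfc]
  exact cfc_nonneg fun x _ => le_max_right x 0

lemma le_matPos {A : Matrix n n ℂ} (hA : A.IsHermitian) : A ≤ matPos A :=
  calc A = cfc (fun x : ℝ => x) A := (cfc_id' ℝ A hA.isSelfAdjoint).symm
    _ ≤ matPos A := by
        rw [matPos_eq_cfc]
        exact cfc_mono fun x _ => le_max_left x 0

lemma projNonneg_nonneg (A : Matrix n n ℂ) : 0 ≤ projNonneg A := by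
  rw [projNonneg_eq_cfc]
  exact cfc_nonneg fun x _ => by split_ifs <;> norm_num

lemma projNonneg_le_one (A : Matrix n n ℂ) : projNonneg A ≤ 1 := by
  rw [projNonneg_eq_cfc]
  exact cfc_le_one _ A fun x _ => by split_ifs <;> norm_num

lemma projNonneg_mul_self {A : Matrix n n ℂ} (hA : A.IsHermitian) :
    projNonneg A * A = matPos A :=
  calc projNonneg A * A
      = cfc (fun x : ℝ => if 0 ≤ x then 1 else 0) A * cfc (fun x : ℝ => x) A := by
        rw [projNonneg_eq_cfc, cfc_id' ℝ A hA.isSelfAdjoint]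
    _ = cfc (fun x : ℝ => (if 0 ≤ x then 1 else 0) * x) A :=
        (cfc_mul _ _ A (A.finite_real_spectrum.continuousOn _)).symm
    _ = matPos A := by
        rw [matPos_eq_cfc]
        refine cfc_congr fun x _ => ?_
        split_ifs with hx
        · simp [hx]
        · simp [le_of_not_ge hx]

lemma trace_matPos_le {D M : Matrix n n ℂ} (hM : 0 ≤ M) (hDM : D ≤ M) :
    (matPos D).trace ≤ M.trace :=
  have hD : D.IsHermitian := by
    simpa using (nonneg_iff_posSemidef.mp hM).1.sub (le_iff.mp hDM).1
  calc (matPos D).trace = (projNonneg D * D).trace := by rw [projNonneg_mul_self hD]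
    _ ≤ (projNonneg D * M).trace :=
        Matrix.trace_mul_le_trace_mul_of_nonneg_left hDM (projNonneg_nonneg D)
    _ ≤ (1 * M).trace := Matrix.trace_mul_le_trace_mul_of_nonneg_right (projNonneg_le_one D) hM
    _ = M.trace := by rw [Matrix.one_mul]

end SpectralParts

section KrausMap

variable {R m n ι : Type*} [Fintype n] [Fintype ι]

def krausMap [Ring R] [StarRing R] (K : ι → Matrix m n R) (X : Matrix n n R) : Matrix m m R :=
  ∑ i, K i * X * (K i)ᴴ

lemma krausMap_sub [Ring R] [StarRing R] (K : ι → Matrix m n R) (X Y : Matrix n n R) :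
    krausMap K (X - Y) = krausMap K X - krausMap K Y := by
  simp only [krausMap, ← Finset.sum_sub_distrib, Matrix.mul_sub, Matrix.sub_mul]

lemma trace_krausMap [Fintype m] [DecidableEq n] [CommRing R] [StarRing R]
    {K : ι → Matrix m n R} (hK : ∑ i, (K i)ᴴ * K i = 1) (X : Matrix n n R) :
    (krausMap K X).trace = X.trace :=
  calc (krausMap K X).trace = ∑ i, ((K i)ᴴ * K i * X).trace := by
        rw [krausMap, Matrix.trace_sum]
        exact Finset.sum_congr rfl fun i _ => Matrix.trace_mul_cycle _ _ _
    _ = X.trace := by rw [← Matrix.trace_sum, ← Finset.sum_mul, hK, Matrix.one_mul]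

variable {𝕜 : Type*} [RCLike 𝕜] [Finite m]

lemma krausMap_nonneg (K : ι → Matrix m n 𝕜) {X : Matrix n n 𝕜} (hX : 0 ≤ X) :
    0 ≤ krausMap K X :=
  (posSemidef_sum _ fun i _ => hX.posSemidef.mul_mul_conjTranspose_same (K i)).nonneg

lemma krausMap_mono (K : ι → Matrix m n 𝕜) {X Y : Matrix n n 𝕜} (hXY : X ≤ Y) :
    krausMap K X ≤ krausMap K Y := by
  rw [← sub_nonneg, ← krausMap_sub]
  exact krausMap_nonneg K (sub_nonneg.mpr hXY)

end KrausMap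

/-- Lemma 2 (Bowen–Datta): monotonicity of `Tr (A − B)₊` under a CPTP map given in
Kraus form: `Tr[(Λ(A) − Λ(B))₊] ≤ Tr[(A − B)₊]`. -/
theorem trPos_cptp_le {d d' : ℕ} (A B : Matrix (Fin d) (Fin d) ℂ)
    (hA : A.PosSemidef) (hB : B.PosSemidef)
    {ι : Type} [Fintype ι] (K : ι → Matrix (Fin d') (Fin d) ℂ)
    (hK : ∑ i, (K i)ᴴ * K i = (1 : Matrix (Fin d) (Fin d) ℂ)) :
    trPos ((∑ i, K i * A * (K i)ᴴ) - ∑ i, K i * B * (K i)ᴴ) ≤ trPos (A - B) := by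
  have hAB : (A - B).IsHermitian := hA.1.sub hB.1
  have key := trace_matPos_le (krausMap_nonneg K (matPos_nonneg (A - B)))
    (krausMap_mono K (le_matPos hAB))
  rw [trace_krausMap hK, krausMap_sub] at key
  exact (Complex.le_def.mp key).1
end
end

section
/- Let ρ be a positive semidefinite d×d complex matrix with Tr ρ ≤ 1, let σ be a positive semidefinite d×d matrix, let γ ∈ ℝ, and let P be an orthogonal projection (P = Pᴴ = P²) such that 2^{−γ}·(PσP) ≤ PρP (in the positive semidefinite order). Then Tr(Pσ) ≤ 2^γ. In particular, Tr[{ρ ≥ 2^{−γ}σ}·σ] ≤ 2^γ, where {ρ ≥ 2^{−γ}σ} is the spectral projection of ρ − 2^{−γ}σ onto [0,∞). -/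
open Matrix
open scoped ComplexOrder

noncomputable section

/-!
Taking traces in `2^{-γ} PσP ≤ PρP` gives
`2^{-γ} Tr(Pσ) = 2^{-γ} Tr(PσP) ≤ Tr(PρP) = Tr(Pρ) ≤ Tr ρ ≤ 1`, where `Tr(Pρ) ≤ Tr ρ` because
`Tr((1 - P)ρ) = Tr((1 - P)ρ(1 - P)) ≥ 0`. The spectral projection `P = {C ≥ 0}` of
`C = ρ - 2^{-γ} σ` is `f(C)` for the indicator `f` of `[0, ∞)`, so `PCP = (f · id · f)(C) ≥ 0`.
-/

namespace Matrix

variable {n 𝕜 : Type*} [Fintype n] [RCLike 𝕜]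

lemma trace_mul_mul_self_of_isIdempotentElem {P : Matrix n n 𝕜} (hP : IsIdempotentElem P)
    (A : Matrix n n 𝕜) : (P * A * P).trace = (P * A).trace := by
  rw [trace_mul_cycle, hP.eq]

lemma PosSemidef.trace_mul_le_trace [DecidableEq n] {P ρ : Matrix n n 𝕜} (hρ : ρ.PosSemidef)
    (hP : P.IsHermitian) (hP2 : IsIdempotentElem P) : (P * ρ).trace ≤ ρ.trace := by
  have hQ : ((1 - P) * ρ * (1 - P)).PosSemidef := by
    have := hρ.mul_mul_conjTranspose_same (1 - P)
    rwa [conjTranspose_sub, conjTranspose_one, hP.eq] at this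
  have := hQ.trace_nonneg
  rw [trace_mul_mul_self_of_isIdempotentElem hP2.one_sub, sub_mul, one_mul, trace_sub] at this
  exact sub_nonneg.mp this

lemma PosSemidef.smul_trace_mul_le_trace [DecidableEq n] {P ρ σ : Matrix n n 𝕜} {c : ℝ}
    (hρ : ρ.PosSemidef) (hP : P.IsHermitian) (hP2 : IsIdempotentElem P)
    (h : (P * ρ * P - c • (P * σ * P)).PosSemidef) : c • (P * σ).trace ≤ ρ.trace :=
  calc c • (P * σ).trace = (c • (P * σ * P)).trace := by
        rw [trace_smul, trace_mul_mul_self_of_isIdempotentElem hP2]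
    _ ≤ (P * ρ * P).trace := by simpa [sub_nonneg] using h.trace_nonneg
    _ = (P * ρ).trace := trace_mul_mul_self_of_isIdempotentElem hP2 ρ
    _ ≤ ρ.trace := hρ.trace_mul_le_trace hP hP2

end Matrix

open scoped MatrixOrder

section projNonneg

variable {n : Type*} [Fintype n] [DecidableEq n] {A : Matrix n n ℂ}

lemma projNonneg_eq_cfc_s2 (hA : A.IsHermitian) :
    projNonneg A = cfc ((Set.Ici (0 : ℝ)).indicator 1) A := by
  rw [hA.cfc_eq, IsHermitian.cfc, Unitary.conjStarAlgAut_apply, projNonneg, dif_pos hA]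
  congr
  ext i
  by_cases h : 0 ≤ hA.eigenvalues i <;> simp [h]

lemma projNonneg_isHermitian (hA : A.IsHermitian) : (projNonneg A).IsHermitian := by
  rw [projNonneg_eq_cfc_s2 hA]
  exact cfc_predicate _ A

lemma projNonneg_isIdempotentElem (hA : A.IsHermitian) : IsIdempotentElem (projNonneg A) := by
  have hcont (f : ℝ → ℝ) : ContinuousOn f (spectrum ℝ A) := A.finite_real_spectrum.continuousOn f
  rw [projNonneg_eq_cfc_s2 hA, IsIdempotentElem, ← cfc_mul _ _ A (hcont _) (hcont _)]
  congr 1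
  ext x
  by_cases h : 0 ≤ x <;> simp [h]

lemma projNonneg_mul_mul_projNonneg_posSemidef (hA : A.IsHermitian) :
    (projNonneg A * A * projNonneg A).PosSemidef := by
  have hcont (f : ℝ → ℝ) : ContinuousOn f (spectrum ℝ A) := A.finite_real_spectrum.continuousOn f
  rw [← nonneg_iff_posSemidef, projNonneg_eq_cfc_s2 hA]
  nth_rewrite 2 [← cfc_id' ℝ A]
  rw [← cfc_mul _ _ A (hcont _) (hcont _), ← cfc_mul _ _ A (hcont _) (hcont _)]
  refine cfc_nonneg fun x _ => ?_
  by_cases h : 0 ≤ x <;> simp [h]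

end projNonneg

/-- Lemma 3 (Bowen–Datta): if `Tr ρ ≤ 1`, `σ ≥ 0`, and `P` is an orthogonal projection with
`2^{−γ}·(PσP) ≤ PρP`, then `Tr(Pσ) ≤ 2^γ`.  In particular
`Tr[{ρ ≥ 2^{−γ}σ}·σ] ≤ 2^γ` for the spectral projection `{ρ ≥ 2^{−γ}σ}` of `ρ − 2^{−γ}σ`
onto `[0,∞)`. -/
theorem trace_proj_sigma_le {d : ℕ} (ρ σ : Matrix (Fin d) (Fin d) ℂ)
    (hρ : ρ.PosSemidef) (hρtr : ρ.trace.re ≤ 1) (hσ : σ.PosSemidef) (γ : ℝ) :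
    (∀ P : Matrix (Fin d) (Fin d) ℂ, P.IsHermitian → P * P = P →
        (P * ρ * P - (2 : ℝ) ^ (-γ) • (P * σ * P)).PosSemidef →
        (P * σ).trace.re ≤ (2 : ℝ) ^ γ) ∧
      (projNonneg (ρ - (2 : ℝ) ^ (-γ) • σ) * σ).trace.re ≤ (2 : ℝ) ^ γ := by
  have hbound : ∀ P : Matrix (Fin d) (Fin d) ℂ, P.IsHermitian → P * P = P →
      (P * ρ * P - (2 : ℝ) ^ (-γ) • (P * σ * P)).PosSemidef →
      (P * σ).trace.re ≤ (2 : ℝ) ^ γ := fun P hP hP2 h => by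
    have hle := (Complex.le_def.mp (hρ.smul_trace_mul_le_trace hP hP2 h)).1
    rw [Complex.smul_re, smul_eq_mul, Real.rpow_neg zero_le_two] at hle
    simpa using (inv_mul_le_iff₀ (by positivity)).mp (hle.trans hρtr)
  refine ⟨hbound, ?_⟩
  have hA : (ρ - (2 : ℝ) ^ (-γ) • σ).IsHermitian := hρ.1.sub (hσ.1.smul (IsSelfAdjoint.all _))
  refine hbound _ (projNonneg_isHermitian hA) (projNonneg_isIdempotentElem hA) ?_
  simpa only [mul_sub, sub_mul, mul_smul_comm, smul_mul_assoc] using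
    projNonneg_mul_mul_projNonneg_posSemidef hA

end
end

section
/- Converse bound for entanglement concentration: let σ_AB be any state on ℂ^{d_A} ⊗ ℂ^{d_B} with σ_B := Tr_A σ_AB, let M be a natural number with 1 ≤ M ≤ min(d_A, d_B), and let Φ⁺_M be the projector onto the maximally entangled unit vector (1/√M) ∑_{k=1}^M e_k ⊗ e_k (e_k the standard basis vectors). Then for every γ ∈ ℝ: ⟨Φ⁺_M| σ_AB |Φ⁺_M⟩ ≤ Tr(σ_AB − 2^{−γ}(I_A ⊗ σ_B))₊ + 2^{−γ}/M. -/
open Matrix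
open scoped ComplexOrder

noncomputable section

open Kronecker

/-- Partial trace over the first (`A`) tensor factor. -/
def trA {dA dB : ℕ} (M : Matrix (Fin dA × Fin dB) (Fin dA × Fin dB) ℂ) :
    Matrix (Fin dB) (Fin dB) ℂ :=
  Matrix.of fun k l => ∑ i, M (i, k) (i, l)

/-- The maximally entangled unit vector `(1/√M) ∑_{k<M} e_k ⊗ e_k` on `ℂ^{d_A} ⊗ ℂ^{d_B}`. -/
def mesVec (dA dB M : ℕ) : Fin dA × Fin dB → ℂ :=
  fun x => if (x.1 : ℕ) = (x.2 : ℕ) ∧ (x.1 : ℕ) < M then ((1 / Real.sqrt M : ℝ) : ℂ) else 0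

/-!
Write `σ_AB = (σ_AB − t (1 ⊗ σ_B)) + t (1 ⊗ σ_B)` with `t = 2^{−γ}`. Expanding a vector of norm
at most one in an eigenbasis of a Hermitian `C` shows that its expectation in `C` is at most
`Tr C₊`. The expectation of `1 ⊗ σ_B` in `Φ⁺_M` is `1/M` times a partial sum of the diagonal of
the positive semidefinite `σ_B`, hence at most `Tr σ_B / M = 1/M`.
-/

namespace Matrix

variable {n : Type*} [Fintype n] [DecidableEq n]

section CommRing

variable {R : Type*} [CommRing R] [StarRing R]

omit [DecidableEq n] in
lemma star_dotProduct_mulVec_conj (U B : Matrix n n R) (v : n → R) :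
    star v ⬝ᵥ (U * B * star U) *ᵥ v = star (star U *ᵥ v) ⬝ᵥ B *ᵥ (star U *ᵥ v) := by
  rw [star_mulVec, star_eq_conjTranspose, conjTranspose_conjTranspose, ← mulVec_mulVec,
    ← mulVec_mulVec, dotProduct_mulVec, dotProduct_mulVec, dotProduct_mulVec, vecMul_vecMul]

lemma star_dotProduct_unitary_mulVec {U : Matrix n n R} (hU : U ∈ unitaryGroup n R)
    (v : n → R) : star (U *ᵥ v) ⬝ᵥ (U *ᵥ v) = star v ⬝ᵥ v := by
  rw [star_mulVec, ← dotProduct_mulVec, mulVec_mulVec, ← star_eq_conjTranspose,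
    Unitary.star_mul_self_of_mem hU, one_mulVec]

lemma star_dotProduct_mulVec_ite (S : Finset n) (c : R) (X : Matrix n n R) :
    star (fun x => if x ∈ S then c else 0) ⬝ᵥ X *ᵥ (fun x => if x ∈ S then c else 0) =
      star c * c * ∑ x ∈ S, ∑ y ∈ S, X x y := by
  simp only [dotProduct, Pi.star_apply, apply_ite star, star_zero, mulVec, mul_ite,
    mul_zero, Finset.sum_ite_mem, Finset.univ_inter, Finset.mul_sum, ite_mul, zero_mul,
    Finset.sum_ite_irrel, Finset.sum_const_zero]
  exact Finset.sum_congr rfl fun x _ => Finset.sum_congr rfl fun y _ => by ring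

end CommRing

omit [DecidableEq n] in
lemma re_star_dotProduct_self (v : n → ℂ) :
    (star v ⬝ᵥ v).re = ∑ i, Complex.normSq (v i) := by
  simp [dotProduct, Complex.normSq_apply, Complex.mul_re, mul_comm]

namespace IsHermitian

variable {A : Matrix n n ℂ}

lemma trPos_eq_sum_max_eigenvalues (hA : A.IsHermitian) :
    trPos A = ∑ i, max (hA.eigenvalues i) 0 := by
  rw [trPos, matPos, dif_pos hA, trace_mul_cycle, Unitary.coe_star_mul_self, one_mul,
    trace_diagonal, Complex.re_sum]
  simp only [Complex.ofReal_re]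

lemma re_star_dotProduct_mulVec (hA : A.IsHermitian) (v : n → ℂ) :
    (star v ⬝ᵥ A *ᵥ v).re = ∑ i, hA.eigenvalues i *
      Complex.normSq ((star (hA.eigenvectorUnitary : Matrix n n ℂ) *ᵥ v) i) := by
  conv_lhs => rw [hA.spectral_theorem, Unitary.conjStarAlgAut_apply, star_dotProduct_mulVec_conj]
  simp only [dotProduct, mulVec_diagonal, Function.comp_apply, Pi.star_apply, Complex.re_sum]
  refine Finset.sum_congr rfl fun i _ => ?_
  rw [Complex.star_def, mul_left_comm, ← Complex.normSq_eq_conj_mul_self]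
  exact Complex.re_ofReal_mul _ _

lemma re_star_dotProduct_mulVec_le_trPos (hA : A.IsHermitian) {v : n → ℂ}
    (hv : (star v ⬝ᵥ v).re ≤ 1) : (star v ⬝ᵥ A *ᵥ v).re ≤ trPos A := by
  set w := star (hA.eigenvectorUnitary : Matrix n n ℂ) *ᵥ v
  have hw : ∑ i, Complex.normSq (w i) ≤ 1 := by
    rwa [← re_star_dotProduct_self,
      star_dotProduct_unitary_mulVec (Unitary.star_mem hA.eigenvectorUnitary.2)]
  rw [hA.re_star_dotProduct_mulVec, hA.trPos_eq_sum_max_eigenvalues]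
  refine Finset.sum_le_sum fun i _ => ?_
  have hwi : Complex.normSq (w i) ≤ 1 :=
    (Finset.single_le_sum (fun j _ => Complex.normSq_nonneg (w j)) (Finset.mem_univ i)).trans hw
  calc hA.eigenvalues i * Complex.normSq (w i)
      ≤ max (hA.eigenvalues i) 0 * Complex.normSq (w i) :=
        mul_le_mul_of_nonneg_right (le_max_left _ _) (Complex.normSq_nonneg _)
    _ ≤ max (hA.eigenvalues i) 0 := mul_le_of_le_one_right (le_max_right _ _) hwi

end IsHermitian

end Matrix

lemma Matrix.IsHermitian.one_kronecker {R m n : Type*} [CommRing R] [StarRing R] [DecidableEq m]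
    {Y : Matrix n n R} (hY : Y.IsHermitian) : ((1 : Matrix m m R) ⊗ₖ Y).IsHermitian := by
  rw [Matrix.IsHermitian, Matrix.conjTranspose_kronecker, Matrix.conjTranspose_one, hY.eq]

section PartialTrace

variable {dA dB : ℕ}

lemma trA_eq_sum_submatrix (X : Matrix (Fin dA × Fin dB) (Fin dA × Fin dB) ℂ) :
    trA X = ∑ i, X.submatrix (Prod.mk i) (Prod.mk i) := by
  ext k l
  simp [trA, Matrix.sum_apply]

lemma Matrix.PosSemidef.trA {X : Matrix (Fin dA × Fin dB) (Fin dA × Fin dB) ℂ}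
    (hX : X.PosSemidef) : (trA X).PosSemidef := by
  rw [trA_eq_sum_submatrix]
  exact Matrix.posSemidef_sum _ fun i _ => hX.submatrix _

lemma trace_trA (X : Matrix (Fin dA × Fin dB) (Fin dA × Fin dB) ℂ) :
    (trA X).trace = X.trace := by
  simp [Matrix.trace, trA, Fintype.sum_prod_type_right]

end PartialTrace

def mesSupport (dA dB M : ℕ) : Finset (Fin dA × Fin dB) :=
  {x | (x.1 : ℕ) = x.2 ∧ (x.1 : ℕ) < M}

section MaximallyEntangled

variable {dA dB : ℕ} (M : ℕ)

lemma mesVec_eq_ite : mesVec dA dB M =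
    fun x => if x ∈ mesSupport dA dB M then ((1 / Real.sqrt M : ℝ) : ℂ) else 0 := by
  ext x
  simp [mesVec, mesSupport]

lemma star_mesVec_dotProduct_mulVec (X : Matrix (Fin dA × Fin dB) (Fin dA × Fin dB) ℂ) :
    star (mesVec dA dB M) ⬝ᵥ X *ᵥ mesVec dA dB M =
      (M : ℝ)⁻¹ • ∑ x ∈ mesSupport dA dB M, ∑ y ∈ mesSupport dA dB M, X x y := by
  rw [mesVec_eq_ite, star_dotProduct_mulVec_ite, Complex.star_def, Complex.conj_ofReal,
    ← Complex.ofReal_mul, Complex.real_smul]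
  congr 2
  rw [one_div, ← mul_inv, Real.mul_self_sqrt (Nat.cast_nonneg M)]

lemma val_fst_eq_val_snd_of_mem_mesSupport {x : Fin dA × Fin dB}
    (hx : x ∈ mesSupport dA dB M) : (x.1 : ℕ) = x.2 := by
  simp only [mesSupport, Finset.mem_filter, Finset.mem_univ, true_and] at hx
  exact hx.1

lemma mesSupport_injOn_fst :
    Set.InjOn (fun x : Fin dA × Fin dB => (x.1 : ℕ)) (mesSupport dA dB M) := by
  intro x hx y hy (hxy : (x.1 : ℕ) = y.1)
  have hx2 := val_fst_eq_val_snd_of_mem_mesSupport M hx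
  have hy2 := val_fst_eq_val_snd_of_mem_mesSupport M hy
  exact Prod.ext (Fin.ext hxy) (Fin.ext (by omega))

lemma mesSupport_injOn_snd : Set.InjOn (fun x : Fin dA × Fin dB => x.2) (mesSupport dA dB M) :=
  fun x hx y hy hxy => mesSupport_injOn_fst M hx hy <| by
    dsimp only at hxy ⊢
    rw [val_fst_eq_val_snd_of_mem_mesSupport M hx, val_fst_eq_val_snd_of_mem_mesSupport M hy, hxy]

lemma card_mesSupport_le : (mesSupport dA dB M).card ≤ M := by
  refine (Finset.card_le_card_of_injOn _ (fun x hx => ?_) (mesSupport_injOn_fst M)).trans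
    (Finset.card_range M).le
  simp only [mesSupport, Finset.coe_filter, Finset.mem_univ, true_and, Set.mem_ofPred_eq] at hx
  simpa using hx.2

lemma re_star_mesVec_dotProduct_self_le_one :
    (star (mesVec dA dB M) ⬝ᵥ mesVec dA dB M).re ≤ 1 := by
  have h := star_mesVec_dotProduct_mulVec M (1 : Matrix (Fin dA × Fin dB) _ ℂ)
  rw [Matrix.one_mulVec] at h
  have hS : ∑ x ∈ mesSupport dA dB M, ∑ y ∈ mesSupport dA dB M, (1 : Matrix _ _ ℂ) x y =
      (mesSupport dA dB M).card := by
    simp [Matrix.one_apply]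
  rw [h, hS, Complex.smul_re, smul_eq_mul, Complex.natCast_re]
  exact inv_mul_le_one_of_le₀ (mod_cast card_mesSupport_le M) (Nat.cast_nonneg M)

lemma star_mesVec_dotProduct_one_kronecker_mulVec (Y : Matrix (Fin dB) (Fin dB) ℂ) :
    star (mesVec dA dB M) ⬝ᵥ ((1 : Matrix (Fin dA) (Fin dA) ℂ) ⊗ₖ Y) *ᵥ mesVec dA dB M =
      (M : ℝ)⁻¹ • ∑ j ∈ (mesSupport dA dB M).image Prod.snd, Y j j := by
  rw [star_mesVec_dotProduct_mulVec, Finset.sum_image (mesSupport_injOn_snd M)]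
  congr 1
  refine Finset.sum_congr rfl fun x hx => ?_
  rw [Finset.sum_eq_single_of_mem x hx fun y hy hyx => ?_, Matrix.kronecker_apply,
    Matrix.one_apply_eq, one_mul]
  rw [Matrix.kronecker_apply, Matrix.one_apply_ne, zero_mul]
  exact fun h => hyx (mesSupport_injOn_fst M hx hy (congrArg Fin.val h)).symm

lemma re_star_mesVec_dotProduct_one_kronecker_mulVec_le {Y : Matrix (Fin dB) (Fin dB) ℂ}
    (hY : Y.PosSemidef) :
    (star (mesVec dA dB M) ⬝ᵥ ((1 : Matrix (Fin dA) (Fin dA) ℂ) ⊗ₖ Y) *ᵥ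
      mesVec dA dB M).re ≤ Y.trace.re / M := by
  rw [star_mesVec_dotProduct_one_kronecker_mulVec, Complex.smul_re, smul_eq_mul, inv_mul_eq_div]
  gcongr
  exact Finset.sum_le_sum_of_subset_of_nonneg (Finset.subset_univ _) fun j _ _ => hY.diag_nonneg

end MaximallyEntangled

theorem ec_converse_bound_general {dA dB : ℕ}
    (σAB : Matrix (Fin dA × Fin dB) (Fin dA × Fin dB) ℂ)
    (hσ : σAB.PosSemidef) (hσtr : σAB.trace = 1)
    (M : ℕ) (γ : ℝ) :
    (star (mesVec dA dB M) ⬝ᵥ σAB.mulVec (mesVec dA dB M)).re ≤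
      trPos (σAB - (2 : ℝ) ^ (-γ) • ((1 : Matrix (Fin dA) (Fin dA) ℂ) ⊗ₖ trA σAB)) +
        (2 : ℝ) ^ (-γ) / M := by
  set t : ℝ := (2 : ℝ) ^ (-γ)
  set K := (1 : Matrix (Fin dA) (Fin dA) ℂ) ⊗ₖ trA σAB
  set v := mesVec dA dB M
  have hC : (σAB - t • K).IsHermitian :=
    hσ.isHermitian.sub (hσ.trA.isHermitian.one_kronecker.smul (IsSelfAdjoint.all t))
  have hK : (star v ⬝ᵥ K *ᵥ v).re ≤ 1 / M := by
    simpa [trace_trA, hσtr] using re_star_mesVec_dotProduct_one_kronecker_mulVec_le M hσ.trA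
  have hsplit : star v ⬝ᵥ σAB *ᵥ v =
      star v ⬝ᵥ (σAB - t • K) *ᵥ v + t • (star v ⬝ᵥ K *ᵥ v) := by
    rw [← dotProduct_smul, ← smul_mulVec, ← dotProduct_add, ← add_mulVec, sub_add_cancel]
  calc (star v ⬝ᵥ σAB *ᵥ v).re
      = (star v ⬝ᵥ (σAB - t • K) *ᵥ v).re + t * (star v ⬝ᵥ K *ᵥ v).re := by
        rw [hsplit, Complex.add_re, Complex.smul_re, smul_eq_mul]
    _ ≤ trPos (σAB - t • K) + t * (1 / M) :=
        add_le_add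
          (hC.re_star_dotProduct_mulVec_le_trPos (re_star_mesVec_dotProduct_self_le_one M))
          (mul_le_mul_of_nonneg_left hK (by positivity))
    _ = trPos (σAB - t • K) + t / M := by rw [mul_one_div]

/-- Converse bound for entanglement concentration: for any state `σ_AB` and any `γ`,
`⟨Φ⁺_M| σ_AB |Φ⁺_M⟩ ≤ Tr(σ_AB − 2^{−γ}(1_A ⊗ σ_B))₊ + 2^{−γ}/M`. -/
theorem ec_converse_bound {dA dB : ℕ}
    (σAB : Matrix (Fin dA × Fin dB) (Fin dA × Fin dB) ℂ)
    (hσ : σAB.PosSemidef) (hσtr : σAB.trace = 1)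
    (M : ℕ) (hM1 : 1 ≤ M) (hM : M ≤ min dA dB) (γ : ℝ) :
    (star (mesVec dA dB M) ⬝ᵥ σAB.mulVec (mesVec dA dB M)).re ≤
      trPos (σAB - (2 : ℝ) ^ (-γ) • ((1 : Matrix (Fin dA) (Fin dA) ℂ) ⊗ₖ trA σAB)) +
        (2 : ℝ) ^ (-γ) / M :=
  ec_converse_bound_general σAB hσ hσtr M γ
end
end
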